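/- Let R > 0. Any horizontal segment in ℍ^n contained in the Euclidean ball B_E(0,R) ⊂ ℝ^{2n+1} forms an angle with the xy-hyperplane {t = 0} which is at most arccos(1/√(1+4R²)). -/

import Mathlib

open MeasureTheory Set
open scoped ENNReal NNReal RealInnerProductSpace

noncomputable section

/-- Points of the Heisenberg group `ℍⁿ`, i.e. `ℝ^(2n+1)` with its Euclidean structure. -/
abbrev HeisPt (n : ℕ) := EuclideanSpace ℝ (Fin (2*n+1))

/-- Index of the `i`-th `x`-coordinate. -/
def xIdx (n : ℕ) (i : Fin n) : Fin (2*n+1) := ⟨i.1, by have := i.2; omega⟩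
/-- Index of the `i`-th `y`-coordinate. -/
def yIdx (n : ℕ) (i : Fin n) : Fin (2*n+1) := ⟨n + i.1, by have := i.2; omega⟩
/-- Index of the `t`-coordinate. -/
def tIdx (n : ℕ) : Fin (2*n+1) := ⟨2*n, by omega⟩

/-- The Heisenberg group law
`(x,y,t)*(x',y',t') = (x+x', y+y', t+t'+2(⟨y,x'⟩−⟨x,y'⟩))`. -/
def heisMul {n : ℕ} (p q : HeisPt n) : HeisPt n := WithLp.toLp 2 (fun j =>
  if j = tIdx n then
    p j + q j + 2 * ((∑ i : Fin n, p (yIdx n i) * q (xIdx n i))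
      - ∑ i : Fin n, p (xIdx n i) * q (yIdx n i))
  else p j + q j)

/-- The Heisenberg group inverse: `(x,y,t)⁻¹ = (−x,−y,−t)`. -/
def heisInv {n : ℕ} (p : HeisPt n) : HeisPt n := WithLp.toLp 2 (fun j => -(p j))

/-- The Korányi (homogeneous) norm `‖(x,y,t)‖_H = ((‖x‖²+‖y‖²)²+t²)^(1/4)`. -/
def korNorm {n : ℕ} (p : HeisPt n) : ℝ :=
  (((∑ i : Fin n, p (xIdx n i) ^ 2) + ∑ i : Fin n, p (yIdx n i) ^ 2) ^ 2
    + p (tIdx n) ^ 2) ^ ((1:ℝ)/4)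

/-- The Heisenberg (Korányi) metric `d_H(p,q) = ‖q⁻¹*p‖_H`. -/
def heisDist {n : ℕ} (p q : HeisPt n) : ℝ := korNorm (heisMul (heisInv q) p)

/-- The Heisenberg ball `B_H(p,r)`. -/
def heisBall {n : ℕ} (p : HeisPt n) (r : ℝ) : Set (HeisPt n) := {q | heisDist p q < r}

/-- Orthogonal projection onto the `xy`-hyperplane `{t = 0}`. -/
def projXY {n : ℕ} (v : HeisPt n) : HeisPt n := WithLp.toLp 2 (fun j => if j = tIdx n then 0 else v j)
/-!
The direction of the horizontal line `s ↦ p * (s e)` is `e + c ∂_t` with slope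
`c = 2 ω(p, e)`, where `ω(p, q) = ⟨p_y, q_x⟩ − ⟨p_x, q_y⟩` is the symplectic form in the group
law. Since `e` is horizontal, the line makes the angle `arccos (1 / √(1 + c²))` with `{t = 0}`.
The slope is the same for every base point `q = p * (s e)` of the line, because `ω` is additive in
its first argument along products and `ω(e, e) = 0`; and Cauchy–Schwarz gives `|ω(q, e)| ≤ ‖q‖ < R`
for a point `q` of the segment. Hence `c² ≤ 4R²`.
-/

open InnerProductGeometry

lemma xIdx_ne_tIdx (n : ℕ) (i : Fin n) : xIdx n i ≠ tIdx n := by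
  simp only [xIdx, tIdx, ne_eq, Fin.ext_iff]; omega

lemma yIdx_ne_tIdx (n : ℕ) (i : Fin n) : yIdx n i ≠ tIdx n := by
  simp only [yIdx, tIdx, ne_eq, Fin.ext_iff]; omega

lemma sum_univ_eq_sum_xIdx_add_sum_yIdx_add_tIdx {M : Type*} [AddCommMonoid M] (n : ℕ)
    (f : Fin (2*n+1) → M) :
    ∑ j, f j = (∑ i : Fin n, f (xIdx n i)) + (∑ i : Fin n, f (yIdx n i)) + f (tIdx n) := by
  have h : 2*n+1 = n + (n+1) := by omega
  rw [← (finCongr h).symm.sum_comp, Fin.sum_univ_add, Fin.sum_univ_castSucc, add_assoc]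
  congr 3
  exact Fin.ext (by simp [tIdx]; omega)

lemma sq_sum_mul_sub_sum_mul_le {ι : Type*} [Fintype ι] (a b c d : ι → ℝ) :
    (∑ i, a i * b i - ∑ i, c i * d i) ^ 2
      ≤ ((∑ i, a i ^ 2) + ∑ i, c i ^ 2) * ((∑ i, b i ^ 2) + ∑ i, d i ^ 2) := by
  have := Finset.sum_mul_sq_le_sq_mul_sq Finset.univ (Sum.elim a c) (Sum.elim b (-d))
  simpa [Fintype.sum_sum_type, sub_eq_add_neg] using this

def symplForm {n : ℕ} (p q : HeisPt n) : ℝ :=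
  (∑ i : Fin n, p (yIdx n i) * q (xIdx n i)) - ∑ i : Fin n, p (xIdx n i) * q (yIdx n i)

section

variable {n : ℕ}

lemma heisMul_eq_add (p q : HeisPt n) :
    heisMul p q = p + q + EuclideanSpace.single (tIdx n) (2 * symplForm p q) := by
  ext j
  by_cases hj : j = tIdx n
  · subst hj; simp [heisMul, symplForm]
  · simp [heisMul, hj]

lemma heisMul_apply_xIdx (p q : HeisPt n) (i : Fin n) :
    heisMul p q (xIdx n i) = p (xIdx n i) + q (xIdx n i) := by
  simp [heisMul_eq_add, xIdx_ne_tIdx]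

lemma heisMul_apply_yIdx (p q : HeisPt n) (i : Fin n) :
    heisMul p q (yIdx n i) = p (yIdx n i) + q (yIdx n i) := by
  simp [heisMul_eq_add, yIdx_ne_tIdx]

lemma symplForm_heisMul_left (p q r : HeisPt n) :
    symplForm (heisMul p q) r = symplForm p r + symplForm q r := by
  simp only [symplForm, heisMul_apply_xIdx, heisMul_apply_yIdx, add_mul, Finset.sum_add_distrib]
  ring

lemma symplForm_smul_left (s : ℝ) (p q : HeisPt n) :
    symplForm (s • p) q = s * symplForm p q := by
  simp only [symplForm, PiLp.smul_apply, smul_eq_mul, mul_assoc, ← Finset.mul_sum]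
  ring

lemma symplForm_self (p : HeisPt n) : symplForm p p = 0 := by
  simp only [symplForm, mul_comm (p (yIdx n _)), sub_self]

lemma norm_sq_eq_sum_xIdx_add_sum_yIdx_add_tIdx (p : HeisPt n) :
    ‖p‖ ^ 2
      = (∑ i : Fin n, p (xIdx n i) ^ 2) + (∑ i : Fin n, p (yIdx n i) ^ 2) + p (tIdx n) ^ 2 := by
  rw [EuclideanSpace.real_norm_sq_eq, sum_univ_eq_sum_xIdx_add_sum_yIdx_add_tIdx]

lemma sq_symplForm_le (p q : HeisPt n) : symplForm p q ^ 2 ≤ ‖p‖ ^ 2 * ‖q‖ ^ 2 := by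
  calc symplForm p q ^ 2
      ≤ ((∑ i, p (yIdx n i) ^ 2) + ∑ i, p (xIdx n i) ^ 2)
          * ((∑ i, q (xIdx n i) ^ 2) + ∑ i, q (yIdx n i) ^ 2) :=
        sq_sum_mul_sub_sum_mul_le _ _ _ _
    _ ≤ ‖p‖ ^ 2 * ‖q‖ ^ 2 := by
        rw [norm_sq_eq_sum_xIdx_add_sum_yIdx_add_tIdx, norm_sq_eq_sum_xIdx_add_sum_yIdx_add_tIdx]
        gcongr ?_ * ?_ <;> linarith [sq_nonneg (p (tIdx n)), sq_nonneg (q (tIdx n))]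

lemma inner_single_tIdx_eq_zero {e : HeisPt n} (he0 : e (tIdx n) = 0) (c : ℝ) :
    ⟪e, EuclideanSpace.single (tIdx n) c⟫ = 0 := by
  simp [EuclideanSpace.inner_single_right, he0]

lemma norm_add_single_tIdx {e : HeisPt n} (he0 : e (tIdx n) = 0) (c : ℝ) :
    ‖e + EuclideanSpace.single (tIdx n) c‖ = √(‖e‖ ^ 2 + c ^ 2) := by
  rw [← Real.sqrt_sq (norm_nonneg _), norm_add_sq_real, inner_single_tIdx_eq_zero he0,
    PiLp.norm_single, Real.norm_eq_abs, sq_abs, mul_zero, add_zero]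

lemma projXY_add_single_tIdx {e : HeisPt n} (he0 : e (tIdx n) = 0) (c : ℝ) :
    projXY (e + EuclideanSpace.single (tIdx n) c) = e := by
  ext j
  by_cases hj : j = tIdx n
  · simp [projXY, hj, he0]
  · simp [projXY, hj]

end

theorem horizontal_segment_angle_bound_general
    (n : ℕ) (R : ℝ) (e : HeisPt n) (he0 : e (tIdx n) = 0) (he : ‖e‖ = 1)
    (p : HeisPt n) (s₁ s₂ : ℝ) (hs : s₁ < s₂)
    (hsub : ∀ s ∈ Icc s₁ s₂, heisMul p (s • e) ∈ Metric.ball (0 : HeisPt n) R) :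
    InnerProductGeometry.angle (heisMul p e - p) (projXY (heisMul p e - p))
      ≤ Real.arccos (1 / Real.sqrt (1 + 4*R^2)) := by
  set c := 2 * symplForm p e
  have hdir : heisMul p e - p = e + EuclideanSpace.single (tIdx n) c := by
    rw [heisMul_eq_add]; abel
  have hc : c ^ 2 ≤ 4 * R ^ 2 := by
    set q := heisMul p (s₁ • e)
    have hq : ‖q‖ < R := mem_ball_zero_iff.1 (hsub s₁ (left_mem_Icc.2 hs.le))
    have hslope : symplForm q e = symplForm p e := by
      rw [symplForm_heisMul_left, symplForm_smul_left, symplForm_self, mul_zero, add_zero]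
    have hCS := sq_symplForm_le q e
    rw [hslope, he] at hCS
    nlinarith [norm_nonneg q]
  rw [hdir, projXY_add_single_tIdx he0, angle_comm, angle_add_eq_arccos_of_inner_eq_zero
    (inner_single_tIdx_eq_zero he0 c), norm_add_single_tIdx he0, he]
  gcongr
  linarith

theorem horizontal_segment_angle_bound
    (n : ℕ) (R : ℝ) (hR : 0 < R) (e : HeisPt n) (he0 : e (tIdx n) = 0) (he : ‖e‖ = 1)
    (p : HeisPt n) (s₁ s₂ : ℝ) (hs : s₁ < s₂)
    (hsub : ∀ s ∈ Icc s₁ s₂, heisMul p (s • e) ∈ Metric.ball (0 : HeisPt n) R) :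
    InnerProductGeometry.angle (heisMul p e - p) (projXY (heisMul p e - p))
      ≤ Real.arccos (1 / Real.sqrt (1 + 4*R^2)) :=
  horizontal_segment_angle_bound_general n R e he0 he p s₁ s₂ hs hsub
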